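/- arXiv:2102.09837 — 2 statements merged into one kernel-verified Lean document; each statement's English description precedes it below -/
import Mathlib

section
/- (Lemma: determinate BATs determine all fluent values.) Let Σ be a determinate finite-domain basic action theory over fluents F, δ a program over Σ, w and w' any two worlds, and z a finite timed trace such that the program configuration ⟨⟨⟩, δ⟩ reaches ⟨z, δ'⟩ under the transition relation induced by w_Σ. Then (1) ⟨⟨⟩, δ⟩ also reaches ⟨z, δ'⟩ under w'_Σ, and (2) for every primitive formula F(t⃗) with F ∈ F, w_Σ[F(t⃗), z] = w'_Σ[F(t⃗), z]. -/
/-- A timed trace: a finite sequence of (action standard name, time) pairs. -/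
abbrev TimedTrace (Act : Type) := List (Act × ℚ)

/-- A timed trace is valid if its time stamps are monotonically non-decreasing. -/
def ValidT {Act : Type} (z : TimedTrace Act) : Prop :=
  List.Chain' (· ≤ ·) (z.map Prod.snd)

/-- `time z`: the time value of the last action of `z` (0 for the empty trace). -/
def ttime {Act : Type} (z : TimedTrace Act) : ℚ := (z.getLast?).elim 0 Prod.snd

/-- Fluent (static, Poss-free) formulas over primitive formulas `Prim`; quantifiers
of a finite-domain BAT are abbreviations for finite conjunctions/disjunctions. -/
inductive Form (Prim : Type) : Type where
  | tt : Form Prim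
  | atom (f : Prim) : Form Prim
  | neg (φ : Form Prim) : Form Prim
  | and (φ ψ : Form Prim) : Form Prim

/-- Evaluation of a fluent formula in a state assigning truth to primitives. -/
def evalB {Prim : Type} (s : Prim → Bool) : Form Prim → Bool
  | .tt => true
  | .atom f => s f
  | .neg φ => !(evalB s φ)
  | .and φ ψ => evalB s φ && evalB s ψ

/-- A world: assigns truth to every primitive formula after every timed trace,
and says which actions are possible after every timed trace. -/
structure World (Act Prim : Type) where
  val : Prim → TimedTrace Act → Bool
  poss : Act → TimedTrace Act → Prop

/-- Golog programs: actions, tests, sequence, nondeterministic branching,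
pick (nondeterministic choice of argument, over countably many standard names),
iteration and interleaved concurrency. -/
inductive Prog (Act Prim : Type) : Type where
  | act (a : Act) : Prog Act Prim
  | test (φ : Form Prim) : Prog Act Prim
  | seq (δ1 δ2 : Prog Act Prim) : Prog Act Prim
  | choice (δ1 δ2 : Prog Act Prim) : Prog Act Prim
  | pick (f : ℕ → Prog Act Prim) : Prog Act Prim
  | star (δ : Prog Act Prim) : Prog Act Prim
  | par (δ1 δ2 : Prog Act Prim) : Prog Act Prim

/-- A configuration: a timed trace together with the remaining program. -/
abbrev Config (Act Prim : Type) := TimedTrace Act × Prog Act Prim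

/-- `w, z ⊨ φ` for fluent formulas. -/
def holds {Act Prim : Type} (w : World Act Prim) (z : TimedTrace Act) (φ : Form Prim) : Prop :=
  evalB (fun f => w.val f z) φ = true

/-- Final configurations `F^w`. -/
inductive Final {Act Prim : Type} (w : World Act Prim) : Config Act Prim → Prop where
  | test {z φ} : holds w z φ → Final w (z, .test φ)
  | seq {z δ1 δ2} : Final w (z, δ1) → Final w (z, δ2) → Final w (z, .seq δ1 δ2)
  | choiceL {z δ1 δ2} : Final w (z, δ1) → Final w (z, .choice δ1 δ2)
  | choiceR {z δ1 δ2} : Final w (z, δ2) → Final w (z, .choice δ1 δ2)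
  | pick {z f} (n : ℕ) : Final w (z, f n) → Final w (z, .pick f)
  | star {z δ} : Final w (z, .star δ)
  | par {z δ1 δ2} : Final w (z, δ1) → Final w (z, δ2) → Final w (z, .par δ1 δ2)

/-- The one-step program transition relation `⟨z, δ⟩ →_w ⟨z·(a,t), δ'⟩`. -/
inductive Step {Act Prim : Type} (w : World Act Prim) : Config Act Prim → Config Act Prim → Prop where
  | act {z a t} : ttime z ≤ t → w.poss a z →
      Step w (z, .act a) (z ++ [(a, t)], .test .tt)
  | seq1 {z δ1 δ2 z' γ} : Step w (z, δ1) (z', γ) →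
      Step w (z, .seq δ1 δ2) (z', .seq γ δ2)
  | seq2 {z δ1 δ2 c} : Final w (z, δ1) → Step w (z, δ2) c →
      Step w (z, .seq δ1 δ2) c
  | choiceL {z δ1 δ2 c} : Step w (z, δ1) c → Step w (z, .choice δ1 δ2) c
  | choiceR {z δ1 δ2 c} : Step w (z, δ2) c → Step w (z, .choice δ1 δ2) c
  | pick {z f c} (n : ℕ) : Step w (z, f n) c → Step w (z, .pick f) c
  | star {z δ z' γ} : Step w (z, δ) (z', γ) →
      Step w (z, .star δ) (z', .seq γ (.star δ))
  | parL {z δ1 δ2 z' δ1'} : Step w (z, δ1) (z', δ1') →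
      Step w (z, .par δ1 δ2) (z', .par δ1' δ2)
  | parR {z δ1 δ2 z' δ2'} : Step w (z, δ2) (z', δ2') →
      Step w (z, .par δ1 δ2) (z', .par δ1 δ2')

/-- Reflexive-transitive closure `→*_w` of the transition relation. -/
def TransStar {Act Prim : Type} (w : World Act Prim) :
    Config Act Prim → Config Act Prim → Prop :=
  Relation.ReflTransGen (Step w)

/-- `‖δ‖^z_w`: the finite timed traces of program `δ` starting from trace `z`. -/
def Traces {Act Prim : Type} (w : World Act Prim) (δ : Prog Act Prim)
    (z : TimedTrace Act) : Set (TimedTrace Act) :=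
  { z' | ∃ δ', TransStar w (z, δ) (z ++ z', δ') ∧ Final w (z ++ z', δ') }

/-- A determinate finite-domain basic action theory: a determinate initial state
(a truth value for each primitive formula), a (time-independent) precondition
fluent formula for each action, and a successor state axiom for each fluent. -/
structure BAT (Act Prim : Type) : Type where
  init : Prim → Bool
  pre : Act → Form Prim
  ssa : Prim → Act → Form Prim

/-- `SatBAT Σ w`: the world `w` satisfies `Σ₀ ∪ Σ_pre ∪ Σ_post`; this
characterizes `w_Σ` for determinate `Σ` (it is unique up to the values fixed here). -/
def SatBAT {Act Prim : Type} (Sg : BAT Act Prim) (w : World Act Prim) : Prop :=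
  (∀ f, w.val f [] = Sg.init f) ∧
  (∀ a z, w.poss a z ↔ evalB (fun f => w.val f z) (Sg.pre a) = true) ∧
  (∀ f a t z, w.val f (z ++ [(a, t)]) = evalB (fun g => w.val g z) (Sg.ssa f a))


lemma evalB_congr {Prim : Type} {s s' : Prim → Bool} (h : ∀ f, s f = s' f) :
    ∀ φ : Form Prim, evalB s φ = evalB s' φ
  | .tt => rfl
  | .atom f => h f
  | .neg φ => by simp [evalB, evalB_congr h φ]
  | .and φ ψ => by simp [evalB, evalB_congr h φ, evalB_congr h ψ]

lemma val_agree {Act Prim : Type} {Sg : BAT Act Prim} {wS w'S : World Act Prim}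
    (hw : SatBAT Sg wS) (hw' : SatBAT Sg w'S) :
    ∀ z f, wS.val f z = w'S.val f z := by
  intro z
  induction z using List.reverseRecOn with
  | nil => intro f; rw [hw.1, hw'.1]
  | append_singleton z p ih =>
    intro f
    obtain ⟨a, t⟩ := p
    rw [hw.2.2, hw'.2.2]
    exact evalB_congr ih _

lemma final_agree {Act Prim : Type} {Sg : BAT Act Prim} {wS w'S : World Act Prim}
    (hw : SatBAT Sg wS) (hw' : SatBAT Sg w'S) {c : Config Act Prim}
    (h : Final wS c) : Final w'S c := by
  induction h with
  | test hφ =>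
    exact Final.test (by
      unfold holds at *
      rwa [evalB_congr (fun f => (val_agree hw hw' _ f).symm)])
  | seq _ _ ih1 ih2 => exact Final.seq ih1 ih2
  | choiceL _ ih => exact Final.choiceL ih
  | choiceR _ ih => exact Final.choiceR ih
  | pick n _ ih => exact Final.pick n ih
  | star => exact Final.star
  | par _ _ ih1 ih2 => exact Final.par ih1 ih2

lemma step_agree {Act Prim : Type} {Sg : BAT Act Prim} {wS w'S : World Act Prim}
    (hw : SatBAT Sg wS) (hw' : SatBAT Sg w'S) {c c' : Config Act Prim}
    (h : Step wS c c') : Step w'S c c' := by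
  induction h with
  | act ht hp =>
    refine Step.act ht ?_
    rw [hw'.2.1]
    rw [← evalB_congr (fun f => val_agree hw hw' _ f)]
    exact (hw.2.1 _ _).mp hp
  | seq1 _ ih => exact Step.seq1 ih
  | seq2 hf _ ih => exact Step.seq2 (final_agree hw hw' hf) ih
  | choiceL _ ih => exact Step.choiceL ih
  | choiceR _ ih => exact Step.choiceR ih
  | pick n _ ih => exact Step.pick n ih
  | star _ ih => exact Step.star ih
  | parL _ ih => exact Step.parL ih
  | parR _ ih => exact Step.parR ih

/-- determinate BATs determine all fluent values.  If `w_Σ` and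
`w'_Σ` are the `Σ`-worlds obtained from any two worlds (i.e. any two worlds
satisfying the determinate finite-domain BAT `Σ`), and `⟨⟨⟩, δ⟩` reaches
`⟨z, δ'⟩` under `w_Σ`, then (1) it also reaches `⟨z, δ'⟩` under `w'_Σ`, and
(2) `w_Σ` and `w'_Σ` agree on every primitive formula after `z`. -/
theorem det_bat_lemma {Act Prim : Type} (Sg : BAT Act Prim)
    (δ δ' : Prog Act Prim) (wS w'S : World Act Prim)
    (hw : SatBAT Sg wS) (hw' : SatBAT Sg w'S)
    (z : TimedTrace Act)
    (h : TransStar wS ([], δ) (z, δ')) :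
    TransStar w'S ([], δ) (z, δ') ∧ ∀ f : Prim, wS.val f z = w'S.val f z := by
  refine ⟨?_, fun f => val_agree hw hw' z f⟩
  exact Relation.ReflTransGen.mono (fun _ _ hs => step_agree hw hw' hs) _ _ h
end

section
/- (Finality of configurations is preserved under determinate BATs.) Let Σ be a determinate finite-domain BAT, w and w' any worlds, z a finite timed trace reachable from ⟨⟨⟩, δ⟩ under w_Σ, and δ' a program. If ⟨z, δ'⟩ ∈ F^{w_Σ} then ⟨z, δ'⟩ ∈ F^{w'_Σ}, where F^w is the set of final configurations. -/
/-- finality of configurations is preserved under determinate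
BATs.  For any two worlds satisfying the determinate finite-domain BAT `Σ`,
any trace `z` reachable from `⟨⟨⟩, δ⟩` under `w_Σ`, and any program `δ'`:
if `⟨z, δ'⟩ ∈ F^{w_Σ}` then `⟨z, δ'⟩ ∈ F^{w'_Σ}`. -/
theorem final_preserved {Act Prim : Type} (Sg : BAT Act Prim)
    (δ δ' : Prog Act Prim) (wS w'S : World Act Prim)
    (hw : SatBAT Sg wS) (hw' : SatBAT Sg w'S)
    (z : TimedTrace Act)
    (hreach : ∃ δ'' : Prog Act Prim, TransStar wS ([], δ) (z, δ''))
    (hfin : Final wS (z, δ')) :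
    Final w'S (z, δ') := by
  have hval : ∀ (z : TimedTrace Act) (f : Prim), wS.val f z = w'S.val f z := by
    intro z
    induction z using List.reverseRecOn with
    | nil => intro f; rw [hw.1, hw'.1]
    | append_singleton z p ih =>
      intro f
      obtain ⟨a, t⟩ := p
      rw [hw.2.2, hw'.2.2]
      congr 1
      funext g
      exact ih g
  have hholds : ∀ (z : TimedTrace Act) (φ : Form Prim),
      holds wS z φ → holds w'S z φ := by
    intro z φ h
    unfold holds at *
    have : (fun f => wS.val f z) = (fun f => w'S.val f z) := funext (hval z)
    rwa [← this]
  clear hreach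
  suffices h : ∀ c, Final wS c → Final w'S c from h _ hfin
  intro c hfin
  induction hfin with
  | test h => exact .test (hholds _ _ h)
  | seq _ _ ih1 ih2 => exact .seq ih1 ih2
  | choiceL _ ih => exact .choiceL ih
  | choiceR _ ih => exact .choiceR ih
  | pick n _ ih => exact .pick n ih
  | star => exact .star
  | par _ _ ih1 ih2 => exact .par ih1 ih2
end
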